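/- Let K be an algebraically closed field of characteristic 3 and Λ₂ the nonstandard algebra defined by the quiver with loop α at vertex 1, arrows β: 1 → 2, γ: 2 → 1 and relations α²γ = 0, βα² = 0, γβγ = 0, βγβ = 0, βγ = βαγ, α³ = γβ. Then the linear form Ψ with Ψ(α⁴) = Ψ(βαγ) = Ψ(α³) = 1 and Ψ = 0 on the other basis elements {e₁, α, α², γ, αγ, e₂, β, βα} induces an associative, symmetric, nondegenerate bilinear form (a,b) = Ψ(ab) on Λ₂. -/

import Mathlib

/-!
Everything is read off the Gram matrix of `(a, c) ↦ Ψ (a * c)` in the path basis, which is computed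
by multiplying paths with the relations. It is symmetric, which gives `Ψ (a * c) = Ψ (c * a)` by
bilinearity. Pairing each path with the path that completes it to `α⁴` or `βαγ` (`e₁ ↔ α⁴`,
`α ↔ α³`, `α² ↔ α²`, `γ ↔ βα`, `αγ ↔ β`, `e₂ ↔ βαγ`) makes it unitriangular after permuting
columns, so its determinant is nonzero and the form is nondegenerate.
-/

open Matrix

theorem mul_eq_zero_of_orthogonal {M : Type*} [SemigroupWithZero M] {a c e f : M}
    (ha : a * e = a) (hc : f * c = c) (hef : e * f = 0) : a * c = 0 := by
  rw [← ha, ← hc, mul_assoc, ← mul_assoc e, hef, zero_mul, mul_zero]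

theorem mul_mul_eq_of_mul_eq {M : Type*} [Semigroup M] {a b c : M} (h : a * b = c) (x : M) :
    a * (b * x) = c * x := by
  rw [← mul_assoc, h]

theorem Matrix.det_ne_zero_of_isUpperTriangular_submatrix {n R : Type*} [Fintype n]
    [DecidableEq n] [LinearOrder n] [CommRing R] [IsDomain R] {M : Matrix n n R}
    (σ : Equiv.Perm n) (h : (M.submatrix id σ).IsUpperTriangular)
    (hdiag : ∀ i, M i (σ i) ≠ 0) : M.det ≠ 0 := by
  have hprod : (M.submatrix id σ).det ≠ 0 := by
    rw [det_of_isUpperTriangular h]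
    exact Finset.prod_ne_zero_iff.2 fun i _ => hdiag i
  rw [det_permute'] at hprod
  exact right_ne_zero_of_mul hprod

section MulGram

variable {K A ι : Type*}

noncomputable def mulGram [CommSemiring K] [Semiring A] [Algebra K A] (b : Module.Basis ι K A)
    (Ψ : A →ₗ[K] K) : Matrix ι ι K :=
  Matrix.of fun i j => Ψ (b i * b j)

theorem map_mul_comm_of_isSymm_mulGram [CommSemiring K] [Semiring A] [Algebra K A]
    (b : Module.Basis ι K A) (Ψ : A →ₗ[K] K) (h : (mulGram b Ψ).IsSymm) (a c : A) :
    Ψ (a * c) = Ψ (c * a) := by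
  have hB : (LinearMap.mul K A).compr₂ Ψ = ((LinearMap.mul K A).compr₂ Ψ).flip :=
    b.ext fun i => b.ext fun j => h.apply j i
  exact LinearMap.congr_fun₂ hB a c

theorem eq_zero_of_det_mulGram_ne_zero [CommRing K] [IsDomain K] [Ring A] [Algebra K A]
    [Fintype ι] [DecidableEq ι] (b : Module.Basis ι K A) (Ψ : A →ₗ[K] K)
    (hdet : (mulGram b Ψ).det ≠ 0) {a : A} (ha : ∀ x, Ψ (a * x) = 0) : a = 0 := by
  have hG : LinearMap.BilinForm.toMatrix b ((LinearMap.mul K A).compr₂ Ψ) = mulGram b Ψ := by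
    ext i j
    simp [LinearMap.BilinForm.toMatrix_apply, mulGram]
  exact (LinearMap.BilinForm.nondegenerate_of_det_ne_zero _ b (hG ▸ hdet)).1 a ha

end MulGram

def lambda2Gram : Matrix (Fin 11) (Fin 11) ℕ :=
  !![0, 0, 0, 1, 1, 0, 0, 0, 0, 0, 0;
     0, 0, 1, 1, 0, 0, 0, 0, 0, 0, 0;
     0, 1, 1, 0, 0, 0, 0, 0, 0, 0, 0;
     1, 1, 0, 0, 0, 0, 0, 0, 0, 0, 0;
     1, 0, 0, 0, 0, 0, 0, 0, 0, 0, 0;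
     0, 0, 0, 0, 0, 0, 0, 0, 1, 1, 0;
     0, 0, 0, 0, 0, 0, 0, 0, 1, 0, 0;
     0, 0, 0, 0, 0, 0, 0, 0, 0, 0, 1;
     0, 0, 0, 0, 0, 1, 1, 0, 0, 0, 0;
     0, 0, 0, 0, 0, 1, 0, 0, 0, 0, 0;
     0, 0, 0, 0, 0, 0, 0, 1, 0, 0, 0]

theorem lambda2Gram_isSymm : lambda2Gram.IsSymm := by
  unfold Matrix.IsSymm
  decide

def lambda2Pairing : Equiv.Perm (Fin 11) :=
  Function.Involutive.toPerm ![4, 3, 2, 1, 0, 9, 8, 10, 6, 5, 7] fun i => by fin_cases i <;> rfl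

theorem det_map_lambda2Gram_ne_zero {K : Type*} [CommRing K] [IsDomain K] :
    (lambda2Gram.map (Nat.cast : ℕ → K)).det ≠ 0 := by
  refine det_ne_zero_of_isUpperTriangular_submatrix lambda2Pairing (fun i j hji => ?_) fun i => ?_
  · have : lambda2Gram i (lambda2Pairing j) = 0 := by revert i j; decide
    simp [this]
  · have : lambda2Gram i (lambda2Pairing i) = 1 := by revert i; decide
    simp [this]

structure Lambda2Relations {Λ : Type*} [Ring Λ] (e1 e2 α β γ : Λ) : Prop where
  e1_mul_e1 : e1 * e1 = e1
  e2_mul_e2 : e2 * e2 = e2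
  e1_mul_e2 : e1 * e2 = 0
  e2_mul_e1 : e2 * e1 = 0
  e1_mul_α : e1 * α = α
  α_mul_e1 : α * e1 = α
  e2_mul_β : e2 * β = β
  β_mul_e1 : β * e1 = β
  e1_mul_γ : e1 * γ = γ
  γ_mul_e2 : γ * e2 = γ
  α_sq_mul_γ : α ^ 2 * γ = 0
  β_mul_α_sq : β * α ^ 2 = 0
  β_mul_γ : β * γ = β * α * γ
  α_cube : α ^ 3 = γ * β

namespace Lambda2Relations

variable {Λ : Type*} [Ring Λ] {e1 e2 α β γ : Λ}

theorem α_mul_e2 (h : Lambda2Relations e1 e2 α β γ) : α * e2 = 0 :=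
  mul_eq_zero_of_orthogonal h.α_mul_e1 h.e2_mul_e2 h.e1_mul_e2

theorem e2_mul_α (h : Lambda2Relations e1 e2 α β γ) : e2 * α = 0 :=
  mul_eq_zero_of_orthogonal h.e2_mul_e2 h.e1_mul_α h.e2_mul_e1

theorem β_mul_e2 (h : Lambda2Relations e1 e2 α β γ) : β * e2 = 0 :=
  mul_eq_zero_of_orthogonal h.β_mul_e1 h.e2_mul_e2 h.e1_mul_e2

theorem γ_mul_e1 (h : Lambda2Relations e1 e2 α β γ) : γ * e1 = 0 :=
  mul_eq_zero_of_orthogonal h.γ_mul_e2 h.e1_mul_e1 h.e2_mul_e1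

theorem e1_mul_β (h : Lambda2Relations e1 e2 α β γ) : e1 * β = 0 :=
  mul_eq_zero_of_orthogonal h.e1_mul_e1 h.e2_mul_β h.e1_mul_e2

theorem e2_mul_γ (h : Lambda2Relations e1 e2 α β γ) : e2 * γ = 0 :=
  mul_eq_zero_of_orthogonal h.e2_mul_e2 h.e1_mul_γ h.e2_mul_e1

theorem α_mul_β (h : Lambda2Relations e1 e2 α β γ) : α * β = 0 :=
  mul_eq_zero_of_orthogonal h.α_mul_e1 h.e2_mul_β h.e1_mul_e2

theorem γ_mul_α (h : Lambda2Relations e1 e2 α β γ) : γ * α = 0 :=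
  mul_eq_zero_of_orthogonal h.γ_mul_e2 h.e1_mul_α h.e2_mul_e1

theorem γ_mul_γ (h : Lambda2Relations e1 e2 α β γ) : γ * γ = 0 :=
  mul_eq_zero_of_orthogonal h.γ_mul_e2 h.e1_mul_γ h.e2_mul_e1

theorem β_mul_β (h : Lambda2Relations e1 e2 α β γ) : β * β = 0 :=
  mul_eq_zero_of_orthogonal h.β_mul_e1 h.e2_mul_β h.e1_mul_e2

theorem α_pow_five (h : Lambda2Relations e1 e2 α β γ) : α ^ 5 = 0 := by
  rw [show 5 = 2 + 3 from rfl, pow_add, h.α_cube, ← mul_assoc, h.α_sq_mul_γ, zero_mul]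

theorem mulGram_eq {K : Type*} [CommRing K] [Algebra K Λ] (h : Lambda2Relations e1 e2 α β γ)
    (b : Module.Basis (Fin 11) K Λ)
    (hb0 : b 0 = e1) (hb1 : b 1 = α) (hb2 : b 2 = α ^ 2) (hb3 : b 3 = α ^ 3)
    (hb4 : b 4 = α ^ 4) (hb5 : b 5 = γ) (hb6 : b 6 = α * γ) (hb7 : b 7 = e2)
    (hb8 : b 8 = β) (hb9 : b 9 = β * α) (hb10 : b 10 = β * α * γ) :
    mulGram b (b.coord 3 + b.coord 4 + b.coord 10) = lambda2Gram.map (↑) := by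
  set Ψ := b.coord 3 + b.coord 4 + b.coord 10
  have hα5 := h.α_pow_five
  simp only [pow_succ', pow_zero, mul_one, mul_assoc] at hb2 hb3 hb4 hb10 hα5
  have hΨ : Ψ e1 = 0 ∧ Ψ α = 0 ∧ Ψ (α * α) = 0 ∧ Ψ (α * (α * α)) = 1 ∧
      Ψ (α * (α * (α * α))) = 1 ∧ Ψ γ = 0 ∧ Ψ (α * γ) = 0 ∧ Ψ e2 = 0 ∧ Ψ β = 0 ∧
      Ψ (β * α) = 0 ∧ Ψ (β * (α * γ)) = 1 := by
    -- longest words first, so that no proper subword gets folded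
    rw [← hb4, ← hb3, ← hb10, ← hb2, ← hb6, ← hb9, ← hb0, ← hb1, ← hb5, ← hb7, ← hb8]
    simp [Ψ]
  obtain ⟨h0, h1, h2, h3, h4, h5, h6, h7, h8, h9, h10⟩ := hΨ
  have hγβ : γ * β = α * (α * α) := by rw [← h.α_cube]; simp only [pow_succ', pow_zero, mul_one]
  have hβγ : β * γ = β * (α * γ) := by rw [h.β_mul_γ, mul_assoc]
  have hααγ : α * (α * γ) = 0 := by rw [← mul_assoc, ← sq, h.α_sq_mul_γ]
  have hβαα : β * (α * α) = 0 := by rw [← sq, h.β_mul_α_sq]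
  have hβααx (x : Λ) : β * (α * (α * x)) = 0 := by rw [← mul_assoc α, ← mul_assoc, hβαα, zero_mul]
  ext i j
  -- products are right-associated words; `mul_mul_eq_of_mul_eq` lets a relation fire inside a word
  fin_cases i <;> fin_cases j <;>
    simp [mulGram, lambda2Gram, hb0, hb1, hb2, hb3, hb4, hb5, hb6, hb7, hb8, hb9, hb10, mul_assoc,
      h.e1_mul_e1, h.e2_mul_e2, h.e1_mul_e2, h.e2_mul_e1, h.α_mul_e1, h.β_mul_e1, h.γ_mul_e2,
      h.α_mul_e2, h.β_mul_e2, h.γ_mul_e1, hα5, hααγ, hβγ, hβαα, hβααx, hγβ,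
      h.e1_mul_α, h.e2_mul_β, h.e1_mul_γ, h.e1_mul_β, h.e2_mul_α, h.e2_mul_γ,
      h.α_mul_β, h.γ_mul_α, h.γ_mul_γ, h.β_mul_β,
      mul_mul_eq_of_mul_eq h.e1_mul_α, mul_mul_eq_of_mul_eq h.e2_mul_β,
      mul_mul_eq_of_mul_eq h.e1_mul_β, mul_mul_eq_of_mul_eq h.e2_mul_α,
      mul_mul_eq_of_mul_eq h.α_mul_β, mul_mul_eq_of_mul_eq h.γ_mul_α,
      mul_mul_eq_of_mul_eq h.β_mul_β, mul_mul_eq_of_mul_eq hγβ,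
      h0, h1, h2, h3, h4, h5, h6, h7, h8, h9, h10]

end Lambda2Relations

theorem symmetrizing_form_of_Lambda2_general
    (K : Type*) [Field K]
    (Λ : Type*) [Ring Λ] [Algebra K Λ]
    (e1 e2 α β γ : Λ)
    (he1 : e1 * e1 = e1) (he2 : e2 * e2 = e2)
    (h12 : e1 * e2 = 0) (h21 : e2 * e1 = 0)
    (hα1 : e1 * α = α) (hα2 : α * e1 = α)
    (hβ1 : e2 * β = β) (hβ2 : β * e1 = β)
    (hγ1 : e1 * γ = γ) (hγ2 : γ * e2 = γ)
    -- relations of the nonstandard algebra Λ₂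
    (r1 : α ^ 2 * γ = 0) (r2 : β * α ^ 2 = 0)
    (r5 : β * γ = β * α * γ) (r6 : α ^ 3 = γ * β)
    (b : Module.Basis (Fin 11) K Λ)
    (hb0 : b 0 = e1) (hb1 : b 1 = α) (hb2 : b 2 = α ^ 2) (hb3 : b 3 = α ^ 3)
    (hb4 : b 4 = α ^ 4) (hb5 : b 5 = γ) (hb6 : b 6 = α * γ) (hb7 : b 7 = e2)
    (hb8 : b 8 = β) (hb9 : b 9 = β * α) (hb10 : b 10 = β * α * γ) :
    let Ψ : Λ →ₗ[K] K := b.coord 3 + b.coord 4 + b.coord 10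
    (∀ a c : Λ, Ψ (a * c) = Ψ (c * a)) ∧
    (∀ a : Λ, (∀ x : Λ, Ψ (a * x) = 0) → a = 0) := by
  intro Ψ
  have hrel : Lambda2Relations e1 e2 α β γ :=
    ⟨he1, he2, h12, h21, hα1, hα2, hβ1, hβ2, hγ1, hγ2, r1, r2, r5, r6⟩
  have hG : mulGram b Ψ = lambda2Gram.map (↑) :=
    hrel.mulGram_eq b hb0 hb1 hb2 hb3 hb4 hb5 hb6 hb7 hb8 hb9 hb10
  exact ⟨map_mul_comm_of_isSymm_mulGram b Ψ (hG ▸ lambda2Gram_isSymm.map _),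
    fun a => eq_zero_of_det_mulGram_ne_zero b Ψ (hG ▸ det_map_lambda2Gram_ne_zero)⟩

/-- For the nonstandard algebra `Λ₂` (char 3), the linear form `Ψ` with
`Ψ(α⁴) = Ψ(βαγ) = Ψ(α³) = 1` and `Ψ = 0` on the other basis elements induces an
associative, symmetric, nondegenerate bilinear form `(a,b) = Ψ(ab)`. -/
theorem symmetrizing_form_of_Lambda2
    (K : Type*) [Field K] [IsAlgClosed K] [CharP K 3]
    (Λ : Type*) [Ring Λ] [Algebra K Λ]
    (e1 e2 α β γ : Λ)
    (he1 : e1 * e1 = e1) (he2 : e2 * e2 = e2)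
    (h12 : e1 * e2 = 0) (h21 : e2 * e1 = 0) (hsum : e1 + e2 = 1)
    (hα1 : e1 * α = α) (hα2 : α * e1 = α)
    (hβ1 : e2 * β = β) (hβ2 : β * e1 = β)
    (hγ1 : e1 * γ = γ) (hγ2 : γ * e2 = γ)
    -- relations of the nonstandard algebra Λ₂
    (r1 : α ^ 2 * γ = 0) (r2 : β * α ^ 2 = 0) (r3 : γ * β * γ = 0) (r4 : β * γ * β = 0)
    (r5 : β * γ = β * α * γ) (r6 : α ^ 3 = γ * β)
    (b : Module.Basis (Fin 11) K Λ)
    (hb0 : b 0 = e1) (hb1 : b 1 = α) (hb2 : b 2 = α ^ 2) (hb3 : b 3 = α ^ 3)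
    (hb4 : b 4 = α ^ 4) (hb5 : b 5 = γ) (hb6 : b 6 = α * γ) (hb7 : b 7 = e2)
    (hb8 : b 8 = β) (hb9 : b 9 = β * α) (hb10 : b 10 = β * α * γ) :
    let Ψ : Λ →ₗ[K] K := b.coord 3 + b.coord 4 + b.coord 10
    (∀ a c : Λ, Ψ (a * c) = Ψ (c * a)) ∧
    (∀ a : Λ, (∀ x : Λ, Ψ (a * x) = 0) → a = 0) :=
  symmetrizing_form_of_Lambda2_general K Λ e1 e2 α β γ he1 he2 h12 h21 hα1 hα2 hβ1 hβ2 hγ1 hγ2 r1 r2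
    r5 r6 b hb0 hb1 hb2 hb3 hb4 hb5 hb6 hb7 hb8 hb9 hb10
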